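/- In the BLM model on a bipartite graph satisfying informative Seed-and-Snowballs connectivity (each newly added firm has two edges to already-determined workers with distinct productivities, and each newly added worker has an edge to an already-determined firm with nonzero slope), the parameters (α, a, b) are uniquely determined by {θ_{ij} : (i,j) ∈ O} under the normalization a_{j₀} = b_{j₀} = 1 at the seed firm j₀. -/

import Mathlib

/-!
Two affine functions `x ↦ a + b x` that agree at two distinct points have the same
coefficients, and if they agree at one point and share a nonzero slope, that point is
determined by the common value. Along the snowball, the first fact transports `(a, b)` from
reached workers to newly reached firms, the second transports `α` from reached firms to
newly reached workers; the seed firm starts the induction through the normalization.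
-/

/-- Firm sets of the informative Seed-and-Snowballs iteration for the BLM
model: a newly added firm must have edges to two already-reached workers with
distinct productivities, and workers are reached through firms with nonzero
slope. -/
def iSnowJ {W F : Type} (E : Set (W × F)) (j₀ : F) (α : W → ℝ) (b : F → ℝ) :
    ℕ → Set F
  | 0 => {j₀}
  | n + 1 => iSnowJ E j₀ α b n ∪
      {j | ∃ i i' : W, α i ≠ α i' ∧
        (∃ j' ∈ iSnowJ E j₀ α b n, (i, j') ∈ E ∧ b j' ≠ 0) ∧
        (∃ j' ∈ iSnowJ E j₀ α b n, (i', j') ∈ E ∧ b j' ≠ 0) ∧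
        (i, j) ∈ E ∧ (i', j) ∈ E}

/-- Worker sets of the informative Seed-and-Snowballs iteration: workers with
an edge to a reached firm with nonzero slope. -/
def iSnowI {W F : Type} (E : Set (W × F)) (j₀ : F) (α : W → ℝ) (b : F → ℝ)
    (n : ℕ) : Set W :=
  {i | ∃ j ∈ iSnowJ E j₀ α b n, (i, j) ∈ E ∧ b j ≠ 0}

theorem eq_of_add_mul_eq_add_mul {R : Type*} [Ring R] [IsDomain R] {a b x y : R}
    (hb : b ≠ 0) (h : a + b * x = a + b * y) : x = y :=
  mul_left_cancel₀ hb (add_left_cancel h)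

theorem affine_coeffs_eq_of_eq_at_two_points {R : Type*} [CommRing R] [IsDomain R]
    {a a' b b' x y : R} (hxy : x ≠ y)
    (hx : a + b * x = a' + b' * x) (hy : a + b * y = a' + b' * y) :
    a = a' ∧ b = b' := by
  have hb : b = b' := by
    refine mul_right_cancel₀ (sub_ne_zero.mpr hxy) ?_
    linear_combination hx - hy
  subst hb
  exact ⟨add_right_cancel hx, rfl⟩

section Snowball

variable {W F : Type} {E : Set (W × F)} {j₀ : F} {α α' : W → ℝ} {a a' b b' : F → ℝ}

theorem alpha_eq_of_mem_iSnowI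
    (hθ : ∀ p ∈ E, a p.2 + b p.2 * α p.1 = a' p.2 + b' p.2 * α' p.1) {n : ℕ}
    (hJ : ∀ j ∈ iSnowJ E j₀ α b n, a j = a' j ∧ b j = b' j) {i : W}
    (hi : i ∈ iSnowI E j₀ α b n) : α i = α' i := by
  obtain ⟨j, hj, hij, hbj⟩ := hi
  obtain ⟨ha, hb⟩ := hJ j hj
  have hθij := hθ (i, j) hij
  rw [← ha, ← hb] at hθij
  exact eq_of_add_mul_eq_add_mul hbj hθij

theorem params_eq_of_mem_iSnowJ
    (hθ : ∀ p ∈ E, a p.2 + b p.2 * α p.1 = a' p.2 + b' p.2 * α' p.1)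
    (ha₀ : a j₀ = a' j₀) (hb₀ : b j₀ = b' j₀) :
    ∀ n, ∀ j ∈ iSnowJ E j₀ α b n, a j = a' j ∧ b j = b' j := by
  intro n
  induction n with
  | zero =>
    rintro j rfl
    exact ⟨ha₀, hb₀⟩
  | succ n ih =>
    rintro j (hj | ⟨i, i', hne, hi, hi', hij, hi'j⟩)
    · exact ih j hj
    · have hαi := alpha_eq_of_mem_iSnowI hθ ih hi
      have hαi' := alpha_eq_of_mem_iSnowI hθ ih hi'
      refine affine_coeffs_eq_of_eq_at_two_points hne ?_ ?_
      · simpa only [hαi] using hθ (i, j) hij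
      · simpa only [hαi'] using hθ (i', j) hi'j

end Snowball

/-- In the BLM model on a graph satisfying informative
Seed-and-Snowballs connectivity, the parameters (α, a, b) are uniquely
determined by the observed θ's under the normalization a_{j₀} = b_{j₀} = 1. -/
theorem blm_identification {W F : Type} (E : Set (W × F)) (j₀ : F)
    (α α' : W → ℝ) (a a' b b' : F → ℝ)
    (hSS : ∃ N : ℕ, iSnowJ E j₀ α b N = Set.univ ∧ iSnowI E j₀ α b N = Set.univ)
    (hnorm_a : a j₀ = 1) (hnorm_b : b j₀ = 1)
    (hnorm_a' : a' j₀ = 1) (hnorm_b' : b' j₀ = 1)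
    (hθ : ∀ p ∈ E, a p.2 + b p.2 * α p.1 = a' p.2 + b' p.2 * α' p.1) :
    α = α' ∧ a = a' ∧ b = b' := by
  obtain ⟨N, hJ, hI⟩ := hSS
  have hparams := params_eq_of_mem_iSnowJ hθ (hnorm_a.trans hnorm_a'.symm)
    (hnorm_b.trans hnorm_b'.symm) N
  have hfirm (j : F) : a j = a' j ∧ b j = b' j := hparams j (hJ ▸ Set.mem_univ j)
  refine ⟨funext fun i => alpha_eq_of_mem_iSnowI hθ hparams (hI ▸ Set.mem_univ i),
    funext fun j => (hfirm j).1, funext fun j => (hfirm j).2⟩
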